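/- arXiv:1906.03521 — 3 statements merged into one kernel-verified Lean document; each statement's English description precedes it below -/
import Mathlib

section
/- As n → ∞ one has -A_{n-1}·C_n = n²/16 + (u-1)·n/8 + O(1); that is, there is a constant C > 0 with |-A_{n-1}·C_n - n²/16 - (u-1)·n/8| ≤ C for all sufficiently large n. -/
open Complex ComplexConjugate

noncomputable section

/-- The recurrence coefficient `A_n` of the continuous Hahn polynomials. -/
def Acoef (a b c d : ℂ) (n : ℕ) : ℂ :=
  -(((n : ℂ) + a + b + c + d - 1) * ((n : ℂ) + a + c) * ((n : ℂ) + a + d)) /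
    ((2 * (n : ℂ) + a + b + c + d - 1) * (2 * (n : ℂ) + a + b + c + d))

/-- The recurrence coefficient `C_n` of the continuous Hahn polynomials. -/
def Ccoef (a b c d : ℂ) (n : ℕ) : ℂ :=
  ((n : ℂ) * ((n : ℂ) + b + c - 1) * ((n : ℂ) + b + d - 1)) /
    ((2 * (n : ℂ) + a + b + c + d - 2) * (2 * (n : ℂ) + a + b + c + d - 1))

set_option maxHeartbeats 4000000


noncomputable def pc1 (a b c d : ℂ) : ℂ := ((-1:ℂ)/2) + ((3:ℂ)/4)*d + ((5:ℂ)/8)*d^2 + ((-23:ℂ)/16)*d^3 + ((5:ℂ)/8)*d^4 + ((-1:ℂ)/16)*d^5 + ((3:ℂ)/4)*c + ((-11:ℂ)/4)*c*d + ((27:ℂ)/16)*c*d^2 + ((1:ℂ)/2)*c*d^3 + ((-5:ℂ)/16)*c*d^4 + ((5:ℂ)/8)*c^2 + ((27:ℂ)/16)*c^2*d + ((-9:ℂ)/4)*c^2*d^2 + ((3:ℂ)/8)*c^2*d^3 + ((-23:ℂ)/16)*c^3 + ((1:ℂ)/2)*c^3*d + ((3:ℂ)/8)*c^3*d^2 +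 ((5:ℂ)/8)*c^4 + ((-5:ℂ)/16)*c^4*d + ((-1:ℂ)/16)*c^5 + ((3:ℂ)/4)*b + ((-3:ℂ)/4)*b*d + ((-21:ℂ)/16)*b*d^2 + ((3:ℂ)/2)*b*d^3 + ((-5:ℂ)/16)*b*d^4 + ((-3:ℂ)/4)*b*c + ((27:ℂ)/8)*b*c*d + ((-3:ℂ)/2)*b*c*d^2 + ((-1:ℂ)/4)*b*c*d^3 + ((-21:ℂ)/16)*b*c^2 + ((-3:ℂ)/2)*b*c^2*d + ((9:ℂ)/8)*b*c^2*d^2 + ((3:ℂ)/2)*b*c^3 + ((-1:ℂ)/4)*b*c^3*d + ((-5:ℂ)/16)*b*c^4 + ((5:ℂ)/8)*b^2 + ((-21:ℂ)/16)*b^2*d + ((7:ℂ)/4)*b^2*d^2 + ((-5:ℂ)/8)*b^2*d^3 + ((-21:ℂ)/16)*b^2*c + ((-1:ℂ)/2)*b^2*c*d + ((1:ℂ)/8)*b^2*c*d^2 + ((7:ℂ)/4)*b^2*c^2 + ((1:ℂ)/8)*b^2*c^2*d + ((-5:ℂ)/8)*b^2*c^3 + ((-23:ℂ)/16)*b^3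 + ((3:ℂ)/2)*b^3*d + ((-5:ℂ)/8)*b^3*d^2 + ((3:ℂ)/2)*b^3*c + ((-1:ℂ)/4)*b^3*c*d + ((-5:ℂ)/8)*b^3*c^2 + ((5:ℂ)/8)*b^4 + ((-5:ℂ)/16)*b^4*d + ((-5:ℂ)/16)*b^4*c + ((-1:ℂ)/16)*b^5 + ((3:ℂ)/4)*a + ((-3:ℂ)/4)*a*d + ((-21:ℂ)/16)*a*d^2 + ((3:ℂ)/2)*a*d^3 + ((-5:ℂ)/16)*a*d^4 + ((-3:ℂ)/4)*a*c + ((27:ℂ)/8)*a*c*d + ((-3:ℂ)/2)*a*c*d^2 + ((-1:ℂ)/4)*a*c*d^3 + ((-21:ℂ)/16)*a*c^2 + ((-3:ℂ)/2)*a*c^2*d + ((9:ℂ)/8)*a*c^2*d^2 + ((3:ℂ)/2)*a*c^3 + ((-1:ℂ)/4)*a*c^3*d + ((-5:ℂ)/16)*a*c^4 + ((-11:ℂ)/4)*a*b + ((27:ℂ)/8)*a*b*d + ((-1:ℂ)/2)*a*b*d^2 + ((-1:ℂ)/4)*a*b*d^3 + ((27:ℂ)/8)*a*b*c + (-5:ℂ)*a*b*c*d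 + ((5:ℂ)/4)*a*b*c*d^2 + ((-1:ℂ)/2)*a*b*c^2 + ((5:ℂ)/4)*a*b*c^2*d + ((-1:ℂ)/4)*a*b*c^3 + ((27:ℂ)/16)*a*b^2 + ((-3:ℂ)/2)*a*b^2*d + ((1:ℂ)/8)*a*b^2*d^2 + ((-3:ℂ)/2)*a*b^2*c + ((5:ℂ)/4)*a*b^2*c*d + ((1:ℂ)/8)*a*b^2*c^2 + ((1:ℂ)/2)*a*b^3 + ((-1:ℂ)/4)*a*b^3*d + ((-1:ℂ)/4)*a*b^3*c + ((-5:ℂ)/16)*a*b^4 + ((5:ℂ)/8)*a^2 + ((-21:ℂ)/16)*a^2*d + ((7:ℂ)/4)*a^2*d^2 + ((-5:ℂ)/8)*a^2*d^3 + ((-21:ℂ)/16)*a^2*c + ((-1:ℂ)/2)*a^2*c*d + ((1:ℂ)/8)*a^2*c*d^2 + ((7:ℂ)/4)*a^2*c^2 + ((1:ℂ)/8)*a^2*c^2*d + ((-5:ℂ)/8)*a^2*c^3 + ((27:ℂ)/16)*a^2*b + ((-3:ℂ)/2)*a^2*b*d + ((1:ℂ)/8)*a^2*b*d^2 + ((-3:ℂ)/2)*a^2*b*c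 + ((5:ℂ)/4)*a^2*b*c*d + ((1:ℂ)/8)*a^2*b*c^2 + ((-9:ℂ)/4)*a^2*b^2 + ((9:ℂ)/8)*a^2*b^2*d + ((9:ℂ)/8)*a^2*b^2*c + ((3:ℂ)/8)*a^2*b^3 + ((-23:ℂ)/16)*a^3 + ((3:ℂ)/2)*a^3*d + ((-5:ℂ)/8)*a^3*d^2 + ((3:ℂ)/2)*a^3*c + ((-1:ℂ)/4)*a^3*c*d + ((-5:ℂ)/8)*a^3*c^2 + ((1:ℂ)/2)*a^3*b + ((-1:ℂ)/4)*a^3*b*d + ((-1:ℂ)/4)*a^3*b*c + ((3:ℂ)/8)*a^3*b^2 + ((5:ℂ)/8)*a^4 + ((-5:ℂ)/16)*a^4*d + ((-5:ℂ)/16)*a^4*c + ((-5:ℂ)/16)*a^4*b + ((-1:ℂ)/16)*a^5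
noncomputable def pc2 (a b c d : ℂ) : ℂ := ((5:ℂ)/4) + ((-5:ℂ)/4)*d + ((-35:ℂ)/16)*d^2 + ((5:ℂ)/2)*d^3 + ((-9:ℂ)/16)*d^4 + ((-5:ℂ)/4)*c + ((45:ℂ)/8)*c*d + ((-5:ℂ)/2)*c*d^2 + ((-1:ℂ)/4)*c*d^3 + ((-35:ℂ)/16)*c^2 + ((-5:ℂ)/2)*c^2*d + ((13:ℂ)/8)*c^2*d^2 + ((5:ℂ)/2)*c^3 + ((-1:ℂ)/4)*c^3*d + ((-9:ℂ)/16)*c^4 + ((-5:ℂ)/4)*b + ((5:ℂ)/8)*b*d + ((5:ℂ)/2)*b*d^2 + ((-5:ℂ)/4)*b*d^3 + ((5:ℂ)/8)*b*c + (-5:ℂ)*b*c*d + ((5:ℂ)/4)*b*c*d^2 + ((5:ℂ)/2)*b*c^2 + ((5:ℂ)/4)*b*c^2*d + ((-5:ℂ)/4)*b*c^3 + ((-35:ℂ)/16)*b^2 + ((5:ℂ)/2)*b^2*d + ((-11:ℂ)/8)*b^2*d^2 + ((5:ℂ)/2)*b^2*c + ((1:ℂ)/4)*b^2*c*d + ((-11:ℂ)/8)*b^2*c^2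 + ((5:ℂ)/2)*b^3 + ((-5:ℂ)/4)*b^3*d + ((-5:ℂ)/4)*b^3*c + ((-9:ℂ)/16)*b^4 + ((-5:ℂ)/4)*a + ((5:ℂ)/8)*a*d + ((5:ℂ)/2)*a*d^2 + ((-5:ℂ)/4)*a*d^3 + ((5:ℂ)/8)*a*c + (-5:ℂ)*a*c*d + ((5:ℂ)/4)*a*c*d^2 + ((5:ℂ)/2)*a*c^2 + ((5:ℂ)/4)*a*c^2*d + ((-5:ℂ)/4)*a*c^3 + ((45:ℂ)/8)*a*b + (-5:ℂ)*a*b*d + ((1:ℂ)/4)*a*b*d^2 + (-5:ℂ)*a*b*c + ((9:ℂ)/2)*a*b*c*d + ((1:ℂ)/4)*a*b*c^2 + ((-5:ℂ)/2)*a*b^2 + ((5:ℂ)/4)*a*b^2*d + ((5:ℂ)/4)*a*b^2*c + ((-1:ℂ)/4)*a*b^3 + ((-35:ℂ)/16)*a^2 + ((5:ℂ)/2)*a^2*d + ((-11:ℂ)/8)*a^2*d^2 + ((5:ℂ)/2)*a^2*c + ((1:ℂ)/4)*a^2*c*d + ((-11:ℂ)/8)*a^2*c^2 + ((-5:ℂ)/2)*a^2*b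 + ((5:ℂ)/4)*a^2*b*d + ((5:ℂ)/4)*a^2*b*c + ((13:ℂ)/8)*a^2*b^2 + ((5:ℂ)/2)*a^3 + ((-5:ℂ)/4)*a^3*d + ((-5:ℂ)/4)*a^3*c + ((-1:ℂ)/4)*a^3*b + ((-9:ℂ)/16)*a^4
noncomputable def pc3 (a b c d : ℂ) : ℂ := (-1:ℂ) + ((1:ℂ)/2)*d + (2:ℂ)*d^2 + (-1:ℂ)*d^3 + ((1:ℂ)/2)*c + (-4:ℂ)*c*d + (1:ℂ)*c*d^2 + (2:ℂ)*c^2 + (1:ℂ)*c^2*d + (-1:ℂ)*c^3 + ((1:ℂ)/2)*b + (-1:ℂ)*b*d^2 + (2:ℂ)*b*c*d + (-1:ℂ)*b*c^2 + (2:ℂ)*b^2 + (-1:ℂ)*b^2*d + (-1:ℂ)*b^2*c + (-1:ℂ)*b^3 + ((1:ℂ)/2)*a + (-1:ℂ)*a*d^2 + (2:ℂ)*a*c*d + (-1:ℂ)*a*c^2 + (-4:ℂ)*a*b + (2:ℂ)*a*b*d + (2:ℂ)*a*b*c + (1:ℂ)*a*b^2 + (2:ℂ)*a^2 + (-1:ℂ)*a^2*d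 + (-1:ℂ)*a^2*c + (1:ℂ)*a^2*b + (-1:ℂ)*a^3
noncomputable def pc4 (a b c d : ℂ) : ℂ := ((1:ℂ)/4) + ((-1:ℂ)/2)*d^2 + (1:ℂ)*c*d + ((-1:ℂ)/2)*c^2 + ((-1:ℂ)/2)*b^2 + (1:ℂ)*a*b + ((-1:ℂ)/2)*a^2

lemma frac (z1 z2 z3 z4 A B q P : ℂ) (h1 : z1≠0) (h2 : z2≠0) (h3 : z3≠0) (h4 : z4≠0)
    (h : A * B = P + q * (z1*z2*z3*z4)) :
    (A/(z1*z2)) * (B/(z3*z4)) - q = P/(z1*(z2*(z3*z4))) := by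
  rw [div_mul_div_comm, h, add_div, mul_div_assoc,
    show z1*z2*z3*z4 = (z1*z2)*(z3*z4) by ring,
    div_self (mul_ne_zero (mul_ne_zero h1 h2) (mul_ne_zero h3 h4)), mul_one,
    add_sub_cancel_right, mul_assoc]

lemma keyalg (a b c d x : ℂ)
    (h1 : 2*(x-1)+a+b+c+d-1 ≠ 0) (h2 : 2*(x-1)+a+b+c+d ≠ 0)
    (h3 : 2*x+a+b+c+d-2 ≠ 0) (h4 : 2*x+a+b+c+d-1 ≠ 0) :
    -(-(((x-1)+a+b+c+d-1) * ((x-1)+a+c) * ((x-1)+a+d)) /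
        ((2*(x-1)+a+b+c+d-1) * (2*(x-1)+a+b+c+d))) *
      ((x * (x+b+c-1) * (x+b+d-1)) / ((2*x+a+b+c+d-2) * (2*x+a+b+c+d-1)))
      - x^2/16 - ((a+b+c+d)/2 - 1)*x/8
    = (pc4 a b c d * x^4 + pc3 a b c d * x^3 + pc2 a b c d * x^2 + pc1 a b c d * x) /
      ((2*(x-1)+a+b+c+d-1) * ((2*(x-1)+a+b+c+d) * ((2*x+a+b+c+d-2) * (2*x+a+b+c+d-1)))) := by
  have e : -(-(((x-1)+a+b+c+d-1) * ((x-1)+a+c) * ((x-1)+a+d)) /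
        ((2*(x-1)+a+b+c+d-1) * (2*(x-1)+a+b+c+d))) *
      ((x * (x+b+c-1) * (x+b+d-1)) / ((2*x+a+b+c+d-2) * (2*x+a+b+c+d-1)))
      - x^2/16 - ((a+b+c+d)/2 - 1)*x/8
    = ((((x-1)+a+b+c+d-1) * ((x-1)+a+c) * ((x-1)+a+d)) /
        ((2*(x-1)+a+b+c+d-1) * (2*(x-1)+a+b+c+d))) *
      ((x * (x+b+c-1) * (x+b+d-1)) / ((2*x+a+b+c+d-2) * (2*x+a+b+c+d-1)))
      - (x^2/16 + ((a+b+c+d)/2 - 1)*x/8) := by ring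
  rw [e]
  apply frac _ _ _ _ _ _ _ _ h1 h2 h3 h4
  rw [pc1, pc2, pc3, pc4]
  ring


/-- As `n → ∞`, `-A_{n-1}·C_n = n²/16 + (u-1)·n/8 + O(1)`. -/
theorem stmt_5 (a b c d : ℂ) (ha : 0 < a.re) (hb : 0 < b.re)
    (hc : c = conj a) (hd : d = conj b)
    (u : ℝ) (hu : u = (a + b).re) :
    ∃ C > (0 : ℝ), ∃ N : ℕ, 1 ≤ N ∧ ∀ n : ℕ, N ≤ n →
      ‖-(Acoef a b c d (n - 1)) * Ccoef a b c d n
          - (n : ℂ) ^ 2 / 16 - ((u : ℂ) - 1) * (n : ℂ) / 8‖ ≤ C := by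
  have hupos : 0 < u := by
    rw [hu, Complex.add_re]; linarith
  have hs : a + b + c + d = 2 * (u : ℂ) := by
    rw [hc, hd, hu]
    calc a + b + (conj a) + (conj b) = (a + b) + conj (a + b) := by rw [map_add]; ring
      _ = 2 * (((a+b).re : ℝ) : ℂ) := by
          rw [Complex.add_conj]; norm_num
  have hu2 : ((u : ℝ) : ℂ) = (a + b + c + d) / 2 := by rw [hs]; ring
  set C1 : ℝ := ‖pc4 a b c d‖ + ‖pc3 a b c d‖ + ‖pc2 a b c d‖ + ‖pc1 a b c d‖ with hC1
  have hC1nn : 0 ≤ C1 := by positivity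
  refine ⟨C1 + 1, by positivity, 3, by norm_num, ?_⟩
  intro n hn
  have hn1 : (1:ℕ) ≤ n := le_trans (by norm_num) hn
  have hcast : ((n - 1 : ℕ) : ℂ) = (n : ℂ) - 1 := by
    push_cast [Nat.cast_sub hn1]; ring
  have hn3 : (3:ℝ) ≤ (n:ℝ) := by exact_mod_cast hn
  set x : ℂ := (n : ℂ) with hx
  -- lower bound for denominator factors
  have hfac : ∀ t : ℝ, t ≤ 3 → (n : ℝ) ≤ ‖2*x + a + b + c + d - (t:ℂ)‖ := by
    intro t ht
    have hre : (2*x + a + b + c + d - (t:ℂ)).re = 2*(n:ℝ) + 2*u - t := by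
      have e : 2*x + a + b + c + d - (t:ℂ) = ((2*(n:ℝ) + 2*u - t : ℝ) : ℂ) := by
        rw [show 2*x + a + b + c + d - (t:ℂ) = 2*x + (a + b + c + d) - t from by ring, hs, hx]
        push_cast; ring
      rw [e, Complex.ofReal_re]
    calc (n:ℝ) ≤ 2*(n:ℝ) + 2*u - t := by linarith
      _ = (2*x + a + b + c + d - (t:ℂ)).re := hre.symm
      _ ≤ ‖2*x + a + b + c + d - (t:ℂ)‖ := Complex.re_le_norm _
  have hnpos : (0:ℝ) < (n:ℝ) := by linarith
  have hne : ∀ t : ℝ, t ≤ 3 → 2*x + a + b + c + d - (t:ℂ) ≠ 0 := by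
    intro t ht h0
    have := hfac t ht
    rw [h0] at this
    simp at this
    linarith
  have h1 : 2*(x-1) + a + b + c + d - 1 ≠ 0 := by
    have e : 2*(x-1) + a + b + c + d - 1 = 2*x + a + b + c + d - ((3:ℝ):ℂ) := by
      norm_num; ring
    rw [e]; exact hne 3 le_rfl
  have h2 : 2*(x-1) + a + b + c + d ≠ 0 := by
    have e : 2*(x-1) + a + b + c + d = 2*x + a + b + c + d - ((2:ℝ):ℂ) := by
      norm_num; ring
    rw [e]; exact hne 2 (by norm_num)
  have h3 : 2*x + a + b + c + d - 2 ≠ 0 := by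
    have e : 2*x + a + b + c + d - 2 = 2*x + a + b + c + d - ((2:ℝ):ℂ) := by norm_num
    rw [e]; exact hne 2 (by norm_num)
  have h4 : 2*x + a + b + c + d - 1 ≠ 0 := by
    have e : 2*x + a + b + c + d - 1 = 2*x + a + b + c + d - ((1:ℝ):ℂ) := by norm_num
    rw [e]; exact hne 1 (by norm_num)
  rw [Acoef, Ccoef, hcast, hu2, keyalg a b c d x h1 h2 h3 h4, norm_div]
  have hxnorm : ‖x‖ = (n:ℝ) := by simp [hx]
  -- numerator bound
  have hnum : ‖pc4 a b c d * x^4 + pc3 a b c d * x^3 + pc2 a b c d * x^2 + pc1 a b c d * x‖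
      ≤ C1 * (n:ℝ)^4 := by
    have b4 : ‖pc4 a b c d * x^4‖ = ‖pc4 a b c d‖ * (n:ℝ)^4 := by
      rw [norm_mul, norm_pow, hxnorm]
    have b3 : ‖pc3 a b c d * x^3‖ ≤ ‖pc3 a b c d‖ * (n:ℝ)^4 := by
      rw [norm_mul, norm_pow, hxnorm]
      have : (n:ℝ)^3 ≤ (n:ℝ)^4 := pow_le_pow_right₀ (by linarith) (by norm_num)
      exact mul_le_mul_of_nonneg_left this (norm_nonneg _)
    have b2 : ‖pc2 a b c d * x^2‖ ≤ ‖pc2 a b c d‖ * (n:ℝ)^4 := by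
      rw [norm_mul, norm_pow, hxnorm]
      have : (n:ℝ)^2 ≤ (n:ℝ)^4 := pow_le_pow_right₀ (by linarith) (by norm_num)
      exact mul_le_mul_of_nonneg_left this (norm_nonneg _)
    have b1 : ‖pc1 a b c d * x‖ ≤ ‖pc1 a b c d‖ * (n:ℝ)^4 := by
      rw [norm_mul, hxnorm]
      have : (n:ℝ) ≤ (n:ℝ)^4 := by
        calc (n:ℝ) = (n:ℝ)^1 := (pow_one _).symm
          _ ≤ (n:ℝ)^4 := pow_le_pow_right₀ (by linarith) (by norm_num)
      exact mul_le_mul_of_nonneg_left this (norm_nonneg _)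
    calc ‖pc4 a b c d * x^4 + pc3 a b c d * x^3 + pc2 a b c d * x^2 + pc1 a b c d * x‖
        ≤ ‖pc4 a b c d * x^4‖ + ‖pc3 a b c d * x^3‖ + ‖pc2 a b c d * x^2‖ + ‖pc1 a b c d * x‖ := by
          calc ‖pc4 a b c d * x^4 + pc3 a b c d * x^3 + pc2 a b c d * x^2 + pc1 a b c d * x‖
              ≤ ‖pc4 a b c d * x^4 + pc3 a b c d * x^3 + pc2 a b c d * x^2‖ + ‖pc1 a b c d * x‖ :=
                norm_add_le _ _
            _ ≤ ‖pc4 a b c d * x^4 + pc3 a b c d * x^3‖ + ‖pc2 a b c d * x^2‖ + ‖pc1 a b c d * x‖ := by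
                have := norm_add_le (pc4 a b c d * x^4 + pc3 a b c d * x^3) (pc2 a b c d * x^2)
                linarith
            _ ≤ ‖pc4 a b c d * x^4‖ + ‖pc3 a b c d * x^3‖ + ‖pc2 a b c d * x^2‖ + ‖pc1 a b c d * x‖ := by
                have := norm_add_le (pc4 a b c d * x^4) (pc3 a b c d * x^3)
                linarith
      _ ≤ C1 * (n:ℝ)^4 := by rw [hC1]; rw [b4] at *; nlinarith [b3, b2, b1]
  -- denominator bound
  have hden : (n:ℝ)^4 ≤ ‖(2*(x-1)+a+b+c+d-1) * ((2*(x-1)+a+b+c+d) * ((2*x+a+b+c+d-2) * (2*x+a+b+c+d-1)))‖ := by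
    rw [norm_mul, norm_mul, norm_mul]
    have f1 : (n:ℝ) ≤ ‖2*(x-1)+a+b+c+d-1‖ := by
      have e : 2*(x-1) + a + b + c + d - 1 = 2*x + a + b + c + d - ((3:ℝ):ℂ) := by
        norm_num; ring
      rw [e]; exact hfac 3 le_rfl
    have f2 : (n:ℝ) ≤ ‖2*(x-1)+a+b+c+d‖ := by
      have e : 2*(x-1) + a + b + c + d = 2*x + a + b + c + d - ((2:ℝ):ℂ) := by
        norm_num; ring
      rw [e]; exact hfac 2 (by norm_num)
    have f3 : (n:ℝ) ≤ ‖2*x+a+b+c+d-2‖ := by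
      have e : 2*x + a + b + c + d - 2 = 2*x + a + b + c + d - ((2:ℝ):ℂ) := by norm_num
      rw [e]; exact hfac 2 (by norm_num)
    have f4 : (n:ℝ) ≤ ‖2*x+a+b+c+d-1‖ := by
      have e : 2*x + a + b + c + d - 1 = 2*x + a + b + c + d - ((1:ℝ):ℂ) := by norm_num
      rw [e]; exact hfac 1 (by norm_num)
    calc (n:ℝ)^4 = (n:ℝ)*((n:ℝ)*((n:ℝ)*(n:ℝ))) := by ring
      _ ≤ _ := by
          apply mul_le_mul f1 ?_ (by positivity) (norm_nonneg _)
          apply mul_le_mul f2 ?_ (by positivity) (norm_nonneg _)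
          apply mul_le_mul f3 f4 (by positivity) (norm_nonneg _)
  have hdenpos : (0:ℝ) < ‖(2*(x-1)+a+b+c+d-1) * ((2*(x-1)+a+b+c+d) * ((2*x+a+b+c+d-2) * (2*x+a+b+c+d-1)))‖ := by
    calc (0:ℝ) < (n:ℝ)^4 := by positivity
      _ ≤ _ := hden
  rw [div_le_iff₀ hdenpos]
  calc ‖pc4 a b c d * x^4 + pc3 a b c d * x^3 + pc2 a b c d * x^2 + pc1 a b c d * x‖
      ≤ C1 * (n:ℝ)^4 := hnum
    _ ≤ (C1+1) * ‖(2*(x-1)+a+b+c+d-1) * ((2*(x-1)+a+b+c+d) * ((2*x+a+b+c+d-2) * (2*x+a+b+c+d-1)))‖ := by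
        nlinarith [hden, hdenpos]

end
end

section
/- For every integer n ≥ 1 one has the exact identity K_{n+1}/K_{n-1} = -A_{n-1}·C_n. -/
open Complex ComplexConjugate

noncomputable section

/-- The normalizing sequence `K_n`. -/
def Kseq (a b c d : ℂ) (u : ℝ) (n : ℕ) : ℂ :=
  (Complex.Gamma (((n : ℂ) + 1) / 2) * Complex.Gamma (((n : ℂ) + 2 * (u : ℂ) - 1) / 2) *
    Complex.Gamma (((n : ℂ) + a + c) / 2) * Complex.Gamma (((n : ℂ) + a + d) / 2) *
    Complex.Gamma (((n : ℂ) + b + c) / 2) * Complex.Gamma (((n : ℂ) + b + d) / 2)) /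
  ((2 : ℂ) ^ n * Complex.Gamma (((n : ℂ) + (u : ℂ) - 1 / 2) / 2) *
    Complex.Gamma (((n : ℂ) + (u : ℂ)) / 2) ^ 2 *
    Complex.Gamma (((n : ℂ) + (u : ℂ) + 1 / 2) / 2))

lemma aux_half_re (w : ℂ) : (w / 2).re = w.re / 2 := by
  have h : w / 2 = ((1 / 2 : ℝ) : ℂ) * w := by push_cast; ring
  rw [h, Complex.re_ofReal_mul]; ring

lemma aux_ne_zero_of_re_ne {z : ℂ} (h : z.re ≠ 0) : z ≠ 0 := by
  intro h0; rw [h0] at h; simp at h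

lemma aux_gamma_real_ne_zero {x : ℝ} (h1 : -1 < x) (h2 : x ≠ 0) :
    Complex.Gamma (x : ℂ) ≠ 0 := by
  apply Complex.Gamma_ne_zero
  intro k hk
  have hx : x = -(k : ℝ) := by exact_mod_cast hk
  rcases Nat.eq_zero_or_pos k with h | h
  · rw [h] at hx; simp at hx; exact h2 hx
  · have : (1 : ℝ) ≤ k := by exact_mod_cast h
    linarith

lemma aux_ratio (z1 z2 z3 z4 z5 z6 w1 w2 w3 G1 G2 G3 G4 G5 G6 H1 H2 H3 T : ℂ)
    (hG1 : G1 ≠ 0) (hG2 : G2 ≠ 0) (hG3 : G3 ≠ 0) (hG4 : G4 ≠ 0) (hG5 : G5 ≠ 0) (hG6 : G6 ≠ 0)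
    (hH1 : H1 ≠ 0) (hH2 : H2 ≠ 0) (hH3 : H3 ≠ 0) (hT : T ≠ 0)
    (hw1 : w1 ≠ 0) (hw2 : w2 ≠ 0) (hw3 : w3 ≠ 0) :
    z1 * G1 * (z2 * G2) * (z3 * G3) * (z4 * G4) * (z5 * G5) * (z6 * G6) /
        (4 * T * (w1 * H1) * (w2 * H2) ^ 2 * (w3 * H3)) /
      (G1 * G2 * G3 * G4 * G5 * G6 / (T * H1 * H2 ^ 2 * H3))
      = z1 * z2 * z3 * z4 * z5 * z6 / (4 * (w1 * w2 ^ 2 * w3)) := by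
  have hGP : G1 * G2 * G3 * G4 * G5 * G6 ≠ 0 :=
    mul_ne_zero (mul_ne_zero (mul_ne_zero (mul_ne_zero (mul_ne_zero hG1 hG2) hG3) hG4) hG5) hG6
  have hHP : T * H1 * H2 ^ 2 * H3 ≠ 0 :=
    mul_ne_zero (mul_ne_zero (mul_ne_zero hT hH1) (pow_ne_zero _ hH2)) hH3
  have e1 : z1 * G1 * (z2 * G2) * (z3 * G3) * (z4 * G4) * (z5 * G5) * (z6 * G6)
      = (z1 * z2 * z3 * z4 * z5 * z6) * (G1 * G2 * G3 * G4 * G5 * G6) := by ring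
  have e2 : 4 * T * (w1 * H1) * (w2 * H2) ^ 2 * (w3 * H3)
      = (4 * (w1 * w2 ^ 2 * w3)) * (T * H1 * H2 ^ 2 * H3) := by ring
  rw [e1, e2, div_div_div_comm, mul_div_cancel_right₀ _ hGP, mul_div_cancel_right₀ _ hHP]

set_option maxHeartbeats 4000000 in
/-- For every `n ≥ 1` one has `K_{n+1}/K_{n-1} = -A_{n-1}·C_n`. -/
theorem stmt_6 (a b c d : ℂ) (ha : 0 < a.re) (hb : 0 < b.re)
    (hc : c = conj a) (hd : d = conj b)
    (u : ℝ) (hu : u = (a + b).re) :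
    ∀ n : ℕ, 1 ≤ n →
      Kseq a b c d u (n + 1) / Kseq a b c d u (n - 1)
        = -(Acoef a b c d (n - 1)) * Ccoef a b c d n := by
  intro n hn
  obtain ⟨m, rfl⟩ : ∃ m, n = m + 1 := ⟨n - 1, by omega⟩
  simp only [Nat.add_sub_cancel]
  subst hc hd
  have hca : (conj a : ℂ) = 2 * (a.re : ℂ) - a := by
    have h := Complex.add_conj a; push_cast at h; linear_combination h
  have hdb : (conj b : ℂ) = 2 * (b.re : ℂ) - b := by
    have h := Complex.add_conj b; push_cast at h; linear_combination h
  have huR : u = a.re + b.re := by rw [hu, Complex.add_re]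
  have hu' : (u : ℂ) = (a.re : ℂ) + (b.re : ℂ) := by rw [huR]; push_cast; ring
  by_cases hsp : m = 0 ∧ u = 1 / 2
  · -- degenerate case: both sides vanish
    obtain ⟨rfl, hu2⟩ := hsp
    have hK0 : Kseq a b (conj a) (conj b) u 0 = 0 := by
      have harg : (((0 : ℕ) : ℂ) + 2 * (u : ℂ) - 1) / 2 = 0 := by
        rw [hu2]; push_cast; ring
      simp only [Kseq, harg, Complex.Gamma_zero]
      simp
    have hA0 : Acoef a b (conj a) (conj b) 0 = 0 := by
      have hden : (2 * ((0 : ℕ) : ℂ) + a + b + conj a + conj b - 1) = 0 := by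
        rw [hca, hdb]
        have : (a.re : ℂ) + (b.re : ℂ) = (1 : ℂ) / 2 := by
          rw [← hu', hu2]; push_cast; ring
        linear_combination 2 * this
      simp only [Acoef, hden]
      simp
    rw [hK0, div_zero, hA0]
    ring
  · -- main case
    have hm : m ≠ 0 ∨ u ≠ 1 / 2 := by
      by_contra h
      push_neg at h
      exact hsp ⟨h.1, h.2⟩
    have hupos : 0 < u := by rw [huR]; linarith
    have hmR : (0 : ℝ) ≤ (m : ℝ) := Nat.cast_nonneg m
    have h1R : ((m : ℝ) + 2 * (a.re + b.re) - 1) ≠ 0 := by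
      rcases hm with h | h
      · have : (1 : ℝ) ≤ (m : ℝ) := by exact_mod_cast Nat.one_le_iff_ne_zero.mpr h
        nlinarith
      · rcases Nat.eq_zero_or_pos m with h0 | h0
        · rw [h0]; push_cast
          intro habs; apply h; rw [huR]; linarith
        · have : (1 : ℝ) ≤ (m : ℝ) := by exact_mod_cast h0
          nlinarith
    have h2R : ((m : ℝ) + (a.re + b.re) - 1 / 2) ≠ 0 := by
      rcases hm with h | h
      · have : (1 : ℝ) ≤ (m : ℝ) := by exact_mod_cast Nat.one_le_iff_ne_zero.mpr h
        nlinarith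
      · rcases Nat.eq_zero_or_pos m with h0 | h0
        · rw [h0]; push_cast
          intro habs; apply h; rw [huR]; linarith
        · have : (1 : ℝ) ≤ (m : ℝ) := by exact_mod_cast h0
          nlinarith
    -- nonzeroness of the shifted arguments
    have hz1 : ((m : ℂ) + 1) / 2 ≠ 0 := by
      apply aux_ne_zero_of_re_ne
      simp [aux_half_re]
      positivity
    have hz2 : ((m : ℂ) + 2 * ((a.re : ℂ) + (b.re : ℂ)) - 1) / 2 ≠ 0 := by
      apply aux_ne_zero_of_re_ne
      simp [aux_half_re, Complex.add_re, Complex.sub_re, Complex.mul_re]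
      intro habs
      exact h1R (by linarith)
    have hz3 : ((m : ℂ) + a + (2 * (a.re : ℂ) - a)) / 2 ≠ 0 := by
      apply aux_ne_zero_of_re_ne
      simp [aux_half_re, Complex.add_re, Complex.sub_re, Complex.mul_re]
      intro habs
      nlinarith
    have hz4 : ((m : ℂ) + a + (2 * (b.re : ℂ) - b)) / 2 ≠ 0 := by
      apply aux_ne_zero_of_re_ne
      simp [aux_half_re, Complex.add_re, Complex.sub_re, Complex.mul_re]
      intro habs
      nlinarith
    have hz5 : ((m : ℂ) + b + (2 * (a.re : ℂ) - a)) / 2 ≠ 0 := by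
      apply aux_ne_zero_of_re_ne
      simp [aux_half_re, Complex.add_re, Complex.sub_re, Complex.mul_re]
      intro habs
      nlinarith
    have hz6 : ((m : ℂ) + b + (2 * (b.re : ℂ) - b)) / 2 ≠ 0 := by
      apply aux_ne_zero_of_re_ne
      simp [aux_half_re, Complex.add_re, Complex.sub_re, Complex.mul_re]
      intro habs
      nlinarith
    have hw1 : ((m : ℂ) + ((a.re : ℂ) + (b.re : ℂ)) - 1 / 2) / 2 ≠ 0 := by
      apply aux_ne_zero_of_re_ne
      simp [aux_half_re, Complex.add_re, Complex.sub_re]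
      intro habs
      exact h2R (by linarith)
    have hw2 : ((m : ℂ) + ((a.re : ℂ) + (b.re : ℂ))) / 2 ≠ 0 := by
      apply aux_ne_zero_of_re_ne
      simp [aux_half_re, Complex.add_re]
      intro habs
      nlinarith
    have hw3 : ((m : ℂ) + ((a.re : ℂ) + (b.re : ℂ)) + 1 / 2) / 2 ≠ 0 := by
      apply aux_ne_zero_of_re_ne
      simp [aux_half_re, Complex.add_re]
      intro habs
      nlinarith
    -- nonvanishing of the Gamma values
    have hG1 : Complex.Gamma (((m : ℂ) + 1) / 2) ≠ 0 := by
      apply Complex.Gamma_ne_zero_of_re_pos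
      simp [aux_half_re]; positivity
    have hG2 : Complex.Gamma (((m : ℂ) + 2 * ((a.re : ℂ) + (b.re : ℂ)) - 1) / 2) ≠ 0 := by
      have hcast : ((m : ℂ) + 2 * ((a.re : ℂ) + (b.re : ℂ)) - 1) / 2
          = ((((m : ℝ) + 2 * (a.re + b.re) - 1) / 2 : ℝ) : ℂ) := by push_cast; ring
      rw [hcast]
      apply aux_gamma_real_ne_zero
      · nlinarith
      · intro habs; exact h1R (by linarith)
    have hG3 : Complex.Gamma (((m : ℂ) + a + (2 * (a.re : ℂ) - a)) / 2) ≠ 0 := by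
      apply Complex.Gamma_ne_zero_of_re_pos
      simp [aux_half_re, Complex.add_re, Complex.sub_re, Complex.mul_re]
      nlinarith
    have hG4 : Complex.Gamma (((m : ℂ) + a + (2 * (b.re : ℂ) - b)) / 2) ≠ 0 := by
      apply Complex.Gamma_ne_zero_of_re_pos
      simp [aux_half_re, Complex.add_re, Complex.sub_re, Complex.mul_re]
      nlinarith
    have hG5 : Complex.Gamma (((m : ℂ) + b + (2 * (a.re : ℂ) - a)) / 2) ≠ 0 := by
      apply Complex.Gamma_ne_zero_of_re_pos
      simp [aux_half_re, Complex.add_re, Complex.sub_re, Complex.mul_re]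
      nlinarith
    have hG6 : Complex.Gamma (((m : ℂ) + b + (2 * (b.re : ℂ) - b)) / 2) ≠ 0 := by
      apply Complex.Gamma_ne_zero_of_re_pos
      simp [aux_half_re, Complex.add_re, Complex.sub_re, Complex.mul_re]
      nlinarith
    have hH1 : Complex.Gamma (((m : ℂ) + ((a.re : ℂ) + (b.re : ℂ)) - 1 / 2) / 2) ≠ 0 := by
      have hcast : ((m : ℂ) + ((a.re : ℂ) + (b.re : ℂ)) - 1 / 2) / 2
          = ((((m : ℝ) + (a.re + b.re) - 1 / 2) / 2 : ℝ) : ℂ) := by push_cast; ring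
      rw [hcast]
      apply aux_gamma_real_ne_zero
      · nlinarith
      · intro habs; exact h2R (by linarith)
    have hH2 : Complex.Gamma (((m : ℂ) + ((a.re : ℂ) + (b.re : ℂ))) / 2) ≠ 0 := by
      apply Complex.Gamma_ne_zero_of_re_pos
      simp [aux_half_re, Complex.add_re]; nlinarith
    have hH3 : Complex.Gamma (((m : ℂ) + ((a.re : ℂ) + (b.re : ℂ)) + 1 / 2) / 2) ≠ 0 := by
      apply Complex.Gamma_ne_zero_of_re_pos
      simp [aux_half_re, Complex.add_re]; nlinarith
    have h3R : (2 * (m : ℝ) + 2 * (a.re + b.re) - 1) ≠ 0 := by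
      rcases hm with h | h
      · have : (1 : ℝ) ≤ (m : ℝ) := by exact_mod_cast Nat.one_le_iff_ne_zero.mpr h
        nlinarith
      · rcases Nat.eq_zero_or_pos m with h0 | h0
        · rw [h0]; push_cast
          intro habs; apply h; rw [huR]; linarith
        · have : (1 : ℝ) ≤ (m : ℝ) := by exact_mod_cast h0
          nlinarith
    -- denominators of the coefficient side
    have hd1 : (2 * ((m : ℂ)) + a + b + (2 * (a.re : ℂ) - a) + (2 * (b.re : ℂ) - b) - 1) ≠ 0 := by
      apply aux_ne_zero_of_re_ne
      simp [Complex.add_re, Complex.sub_re, Complex.mul_re]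
      intro habs; exact h3R (by linarith)
    have hd2 : (2 * ((m : ℂ)) + a + b + (2 * (a.re : ℂ) - a) + (2 * (b.re : ℂ) - b)) ≠ 0 := by
      apply aux_ne_zero_of_re_ne
      simp [Complex.add_re, Complex.sub_re, Complex.mul_re]
      intro habs; nlinarith
    have hd3 : (2 * ((m : ℂ) + 1) + a + b + (2 * (a.re : ℂ) - a) + (2 * (b.re : ℂ) - b) - 2) ≠ 0 := by
      apply aux_ne_zero_of_re_ne
      simp [Complex.add_re, Complex.sub_re, Complex.mul_re]
      intro habs; nlinarith
    have hd4 : (2 * ((m : ℂ) + 1) + a + b + (2 * (a.re : ℂ) - a) + (2 * (b.re : ℂ) - b) - 1) ≠ 0 := by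
      apply aux_ne_zero_of_re_ne
      simp [Complex.add_re, Complex.sub_re, Complex.mul_re]
      intro habs; nlinarith
    simp only [Kseq, Acoef, Ccoef]
    push_cast
    rw [hca, hdb, hu']
    rw [show ((m : ℂ) + 1 + 1 + 1) / 2 = ((m : ℂ) + 1) / 2 + 1 by ring,
        Complex.Gamma_add_one _ hz1,
        show ((m : ℂ) + 1 + 1 + 2 * ((a.re : ℂ) + (b.re : ℂ)) - 1) / 2
          = ((m : ℂ) + 2 * ((a.re : ℂ) + (b.re : ℂ)) - 1) / 2 + 1 by ring,
        Complex.Gamma_add_one _ hz2,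
        show ((m : ℂ) + 1 + 1 + a + (2 * (a.re : ℂ) - a)) / 2
          = ((m : ℂ) + a + (2 * (a.re : ℂ) - a)) / 2 + 1 by ring,
        Complex.Gamma_add_one _ hz3,
        show ((m : ℂ) + 1 + 1 + a + (2 * (b.re : ℂ) - b)) / 2
          = ((m : ℂ) + a + (2 * (b.re : ℂ) - b)) / 2 + 1 by ring,
        Complex.Gamma_add_one _ hz4,
        show ((m : ℂ) + 1 + 1 + b + (2 * (a.re : ℂ) - a)) / 2
          = ((m : ℂ) + b + (2 * (a.re : ℂ) - a)) / 2 + 1 by ring,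
        Complex.Gamma_add_one _ hz5,
        show ((m : ℂ) + 1 + 1 + b + (2 * (b.re : ℂ) - b)) / 2
          = ((m : ℂ) + b + (2 * (b.re : ℂ) - b)) / 2 + 1 by ring,
        Complex.Gamma_add_one _ hz6,
        show ((m : ℂ) + 1 + 1 + ((a.re : ℂ) + (b.re : ℂ)) - 1 / 2) / 2
          = ((m : ℂ) + ((a.re : ℂ) + (b.re : ℂ)) - 1 / 2) / 2 + 1 by ring,
        Complex.Gamma_add_one _ hw1,
        show ((m : ℂ) + 1 + 1 + ((a.re : ℂ) + (b.re : ℂ))) / 2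
          = ((m : ℂ) + ((a.re : ℂ) + (b.re : ℂ))) / 2 + 1 by ring,
        Complex.Gamma_add_one _ hw2,
        show ((m : ℂ) + 1 + 1 + ((a.re : ℂ) + (b.re : ℂ)) + 1 / 2) / 2
          = ((m : ℂ) + ((a.re : ℂ) + (b.re : ℂ)) + 1 / 2) / 2 + 1 by ring,
        Complex.Gamma_add_one _ hw3]
    have h2pow : (2 : ℂ) ^ (m + 1 + 1) = 4 * (2 : ℂ) ^ m := by ring
    rw [h2pow]
    have hT : (2 : ℂ) ^ m ≠ 0 := pow_ne_zero _ two_ne_zero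
    rw [aux_ratio _ _ _ _ _ _ _ _ _ _ _ _ _ _ _ _ _ _ _
      hG1 hG2 hG3 hG4 hG5 hG6 hH1 hH2 hH3 hT hw1 hw2 hw3]
    have hv1 : ((m : ℂ) + ((a.re : ℂ) + (b.re : ℂ))) * 2 - 1 ≠ 0 := by
      apply aux_ne_zero_of_re_ne
      simp [Complex.add_re, Complex.sub_re, Complex.mul_re]
      intro habs
      exact h2R (by linarith)
    have hv2 : ((m : ℂ) + ((a.re : ℂ) + (b.re : ℂ))) ≠ 0 := by
      apply aux_ne_zero_of_re_ne
      simp [Complex.add_re]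
      intro habs
      nlinarith
    have hv3 : ((m : ℂ) + ((a.re : ℂ) + (b.re : ℂ))) * 2 + 1 ≠ 0 := by
      apply aux_ne_zero_of_re_ne
      simp [Complex.add_re, Complex.mul_re]
      intro habs
      nlinarith
    field_simp [hv1, hv2, hv3]
    rw [div_eq_div_iff (mul_ne_zero (by convert hv1 using 1; ring) (by convert hv3 using 1; ring))
      (mul_ne_zero (mul_ne_zero (mul_ne_zero (by convert hd2 using 1; ring) (by convert hd1 using 1; ring))
        (by convert hd3 using 1; ring)) (by convert hd4 using 1; ring))]
    ring
end
end

section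
/- As y → +∞ along the positive reals, |Γ(a+iy)·Γ(b+iy)| = 2π·y^{u-1}·e^{-πy - πv/2}·(1+o(1)); equivalently, |Γ(a+iy)·Γ(b+iy)| / (2π·y^{u-1}·e^{-πy-πv/2}) converges to 1. (Here |Γ(a+iy)·Γ(b+iy)|² = Γ(a+iy)Γ(b+iy)Γ(c-iy)Γ(d-iy) is the weight function w(y) of the continuous Hahn polynomials.) -/
open Complex ComplexConjugate Filter Topology

noncomputable section

namespace Stmt10

open Set

def qf (t u : ℝ) : ℝ := u / Real.sqrt (u ^ 2 + t ^ 2)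

lemma qf_pos {t u : ℝ} (ht : 0 < t) (hu : 0 < u) : 0 < qf t u := by
  have : 0 < u ^ 2 + t ^ 2 := by positivity
  unfold qf; positivity

lemma log_qf {t u : ℝ} (ht : 0 < t) (hu : 0 < u) :
    Real.log (qf t u) = Real.log u - Real.log (u ^ 2 + t ^ 2) / 2 := by
  unfold qf
  rw [Real.log_div hu.ne' (by positivity), Real.log_sqrt (by positivity)]

lemma concaveOn_logqf {t : ℝ} (ht : 0 < t) :
    ConcaveOn ℝ (Ioi 0) (fun u : ℝ => Real.log u - Real.log (u ^ 2 + t ^ 2) / 2) := by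
  have hD : ∀ u : ℝ, u ∈ interior (Ioi (0:ℝ)) → 0 < u := by
    intro u hu; rwa [interior_Ioi, mem_Ioi] at hu
  apply concaveOn_of_hasDerivWithinAt2_nonpos (f' := fun u => u⁻¹ - 2 * u / (u ^ 2 + t ^ 2) / 2)
    (f'' := fun u => -(u ^ 2)⁻¹ -
      (2 * (u ^ 2 + t ^ 2) - 2 * u * (2 * u)) / ((u ^ 2 + t ^ 2) ^ 2) / 2)
    (convex_Ioi 0) ?_ ?_ ?_ ?_
  · intro u hu
    rw [mem_Ioi] at hu
    have h2 : (0:ℝ) < u ^ 2 + t ^ 2 := by positivity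
    have hc : ContinuousAt (fun u : ℝ => u ^ 2 + t ^ 2) u := by fun_prop
    exact ((Real.continuousAt_log hu.ne').sub
      ((hc.log h2.ne').div_const 2)).continuousWithinAt
  · intro u hu
    have hu0 := hD u hu
    have h2 : (0:ℝ) < u ^ 2 + t ^ 2 := by positivity
    have hA : HasDerivAt (fun u : ℝ => u ^ 2 + t ^ 2) (2 * u) u := by
      simpa using (hasDerivAt_pow 2 u).add_const (t ^ 2)
    exact ((Real.hasDerivAt_log hu0.ne').sub ((hA.log h2.ne').div_const 2)).hasDerivWithinAt
  · intro u hu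
    have hu0 := hD u hu
    have h2 : (0:ℝ) < u ^ 2 + t ^ 2 := by positivity
    have hA : HasDerivAt (fun u : ℝ => u ^ 2 + t ^ 2) (2 * u) u := by
      simpa using (hasDerivAt_pow 2 u).add_const (t ^ 2)
    have hB : HasDerivAt (fun u : ℝ => 2 * u) 2 u := by
      simpa using (hasDerivAt_id u).const_mul 2
    exact ((hasDerivAt_inv hu0.ne').sub ((hB.div hA h2.ne').div_const 2)).hasDerivWithinAt
  · intro u hu
    have hu0 := hD u hu
    have h2 : (0:ℝ) < u ^ 2 + t ^ 2 := by positivity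
    have e : -(u ^ 2)⁻¹ - (2 * (u ^ 2 + t ^ 2) - 2 * u * (2 * u)) / ((u ^ 2 + t ^ 2) ^ 2) / 2
        = -(((u ^ 2 + t ^ 2) ^ 2 + u ^ 2 * (t ^ 2 - u ^ 2)) / (u ^ 2 * (u ^ 2 + t ^ 2) ^ 2)) := by
      field_simp
      ring
    show -(u ^ 2)⁻¹ - (2 * (u ^ 2 + t ^ 2) - 2 * u * (2 * u)) / ((u ^ 2 + t ^ 2) ^ 2) / 2 ≤ 0
    rw [e, neg_nonpos]
    apply div_nonneg _ (by positivity)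
    nlinarith [sq_nonneg u, sq_nonneg t, sq_nonneg (u*t)]


lemma fact1 {t u θ : ℝ} (ht : 0 < t) (hu : 0 < u) (hθ0 : 0 ≤ θ) (hθ1 : θ ≤ 1) :
    qf t u ^ (1 - θ) * qf t (u + 1) ^ θ ≤ qf t (u + θ) := by
  have h1 : (0:ℝ) < u + 1 := by linarith
  have h2 : (0:ℝ) < u + θ := by linarith
  have key := (concaveOn_logqf ht).2 (mem_Ioi.2 hu) (mem_Ioi.2 h1)
    (by linarith : (0:ℝ) ≤ 1 - θ) hθ0 (by ring)
  simp only [smul_eq_mul] at key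
  have hcomb : (1 - θ) * u + θ * (u + 1) = u + θ := by ring
  rw [hcomb] at key
  rw [← log_qf ht hu, ← log_qf ht h1, ← log_qf ht h2] at key
  calc qf t u ^ (1 - θ) * qf t (u + 1) ^ θ
      = Real.exp ((1 - θ) * Real.log (qf t u) + θ * Real.log (qf t (u + 1))) := by
        rw [Real.exp_add, Real.rpow_def_of_pos (qf_pos ht hu),
          Real.rpow_def_of_pos (qf_pos ht h1), mul_comm (Real.log _), mul_comm (Real.log _)]
    _ ≤ Real.exp (Real.log (qf t (u + θ))) := Real.exp_le_exp.2 key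
    _ = qf t (u + θ) := Real.exp_log (qf_pos ht h2)

lemma fact2 {t u θ : ℝ} (ht : 0 < t) (hu : 1 < u) (hθ0 : 0 ≤ θ) (hθ1 : θ ≤ 1) :
    qf t (u - 1) ^ θ * qf t (u + θ) ≤ qf t u ^ (1 + θ) := by
  have hu0 : (0:ℝ) < u := by linarith
  have h1 : (0:ℝ) < u - 1 := by linarith
  have h2 : (0:ℝ) < u + θ := by linarith
  have hw : (0:ℝ) < 1 + θ := by linarith
  have key := (concaveOn_logqf ht).2 (mem_Ioi.2 h1) (mem_Ioi.2 h2)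
    (by positivity : (0:ℝ) ≤ θ / (1 + θ)) (by positivity : (0:ℝ) ≤ 1 / (1 + θ))
    (by field_simp; ring)
  simp only [smul_eq_mul] at key
  have hcomb : θ / (1 + θ) * (u - 1) + 1 / (1 + θ) * (u + θ) = u := by
    field_simp; ring
  rw [hcomb] at key
  rw [← log_qf ht hu0, ← log_qf ht h1, ← log_qf ht h2] at key
  have key2 : θ * Real.log (qf t (u - 1)) + Real.log (qf t (u + θ))
      ≤ (1 + θ) * Real.log (qf t u) := by
    have := mul_le_mul_of_nonneg_left key hw.le
    rw [mul_add] at this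
    calc θ * Real.log (qf t (u - 1)) + Real.log (qf t (u + θ))
        = (1 + θ) * (θ / (1 + θ) * Real.log (qf t (u - 1)))
          + (1 + θ) * (1 / (1 + θ) * Real.log (qf t (u + θ))) := by
          field_simp
      _ ≤ (1 + θ) * Real.log (qf t u) := by linarith
  calc qf t (u - 1) ^ θ * qf t (u + θ)
      = Real.exp (θ * Real.log (qf t (u - 1)) + Real.log (qf t (u + θ))) := by
        rw [Real.exp_add, Real.rpow_def_of_pos (qf_pos ht h1), mul_comm (Real.log _),
          Real.exp_log (qf_pos ht h2)]
    _ ≤ Real.exp ((1 + θ) * Real.log (qf t u)) := Real.exp_le_exp.2 key2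
    _ = qf t u ^ (1 + θ) := by
        rw [Real.rpow_def_of_pos (qf_pos ht hu0), mul_comm (Real.log _)]


def Af (x t : ℝ) : ℝ := ‖Complex.Gamma (↑x + Complex.I * ↑t)‖

def Pn (t x : ℝ) (n : ℕ) : ℝ := ∏ j ∈ Finset.range (n + 1), qf t (x + j)

lemma Pn_pos {t x : ℝ} (ht : 0 < t) (hx : 0 < x) (n : ℕ) : 0 < Pn t x n :=
  Finset.prod_pos fun j _ => qf_pos ht (by positivity)

lemma limP {x : ℝ} (t : ℝ) (hx : 0 < x) :
    Tendsto (fun n => Pn t x n) atTop (𝓝 (Af x t / Real.Gamma x)) := by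
  have key : ∀ n : ℕ, 1 ≤ n →
      ‖Complex.GammaSeq (↑x + I * ↑t) n‖ / Real.GammaSeq x n = Pn t x n := by
    intro n hn
    have hn0 : (0:ℝ) < n := by exact_mod_cast hn
    have hnum : ‖Complex.GammaSeq (↑x + I * ↑t) n‖
        = ((n:ℝ) ^ x * (n.factorial : ℝ)) / ∏ j ∈ Finset.range (n + 1), Real.sqrt ((x + j) ^ 2 + t ^ 2) := by
      unfold Complex.GammaSeq
      rw [norm_div, norm_mul, norm_prod]
      congr 1
      · congr 1
        · rw [← Complex.ofReal_natCast, Complex.norm_cpow_eq_rpow_re_of_pos hn0]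
          congr 1
          simp
        · simp
      · refine Finset.prod_congr rfl fun j _ => ?_
        have e : (↑x + I * ↑t + (j:ℂ)) = ((x + j : ℝ) : ℂ) + ((t : ℝ) : ℂ) * I := by
          push_cast; ring
        rw [e, Complex.norm_add_mul_I]
    have hden : Real.GammaSeq x n
        = ((n:ℝ) ^ x * (n.factorial : ℝ)) / ∏ j ∈ Finset.range (n + 1), (x + j) := rfl
    have hK : ((n:ℝ) ^ x * (n.factorial : ℝ)) ≠ 0 := by positivity
    rw [hnum, hden, div_div_div_comm, div_self hK, one_div_div, ← Finset.prod_div_distrib]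
    rfl
  have h2 : Tendsto (fun n => ‖Complex.GammaSeq (↑x + I * ↑t) n‖ / Real.GammaSeq x n)
      atTop (𝓝 (Af x t / Real.Gamma x)) := by
    exact Tendsto.div
      ((continuous_norm.tendsto _).comp (Complex.GammaSeq_tendsto_Gamma _))
      (Real.GammaSeq_tendsto_Gamma x) (Real.Gamma_pos_of_pos hx).ne'
  exact h2.congr' (eventually_atTop.2 ⟨1, key⟩)

lemma chordR1 {t x θ : ℝ} (ht : 0 < t) (hx : 0 < x) (hθ0 : 0 ≤ θ) (hθ1 : θ ≤ 1) :
    (Af x t / Real.Gamma x) ^ (1 - θ) * (Af (x + 1) t / Real.Gamma (x + 1)) ^ θ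
      ≤ Af (x + θ) t / Real.Gamma (x + θ) := by
  refine le_of_tendsto_of_tendsto'
    (((limP t hx).rpow_const (Or.inr (by linarith))).mul
      ((limP t (by linarith : (0:ℝ) < x + 1)).rpow_const (Or.inr hθ0)))
    (limP t (by linarith : (0:ℝ) < x + θ)) (fun n => ?_)
  have hc : ∀ i : ℕ, (0:ℝ) ≤ (i:ℝ) := fun i => Nat.cast_nonneg i
  have p1 : ∀ i : ℕ, 0 < qf t (x + i) := fun i => qf_pos ht (by have := hc i; linarith)
  have p2 : ∀ i : ℕ, 0 < qf t (x + 1 + i) := fun i => qf_pos ht (by have := hc i; linarith)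
  unfold Pn
  rw [← Real.finset_prod_rpow _ _ (fun i _ => (p1 i).le) _,
    ← Real.finset_prod_rpow _ _ (fun i _ => (p2 i).le) _,
    ← Finset.prod_mul_distrib]
  refine Finset.prod_le_prod
    (fun i _ => mul_nonneg (Real.rpow_nonneg (p1 i).le _) (Real.rpow_nonneg (p2 i).le _))
    (fun i _ => ?_)
  have e1 : x + 1 + (i:ℝ) = (x + i) + 1 := by ring
  have e2 : x + θ + (i:ℝ) = (x + i) + θ := by ring
  rw [e1, e2]
  exact fact1 ht (by have := hc i; linarith) hθ0 hθ1

lemma chordR2 {t x θ : ℝ} (ht : 0 < t) (hx : 1 < x) (hθ0 : 0 ≤ θ) (hθ1 : θ ≤ 1) :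
    (Af (x - 1) t / Real.Gamma (x - 1)) ^ θ * (Af (x + θ) t / Real.Gamma (x + θ))
      ≤ (Af x t / Real.Gamma x) ^ (1 + θ) := by
  refine le_of_tendsto_of_tendsto'
    (((limP t (by linarith : (0:ℝ) < x - 1)).rpow_const (Or.inr hθ0)).mul
      (limP t (by linarith : (0:ℝ) < x + θ)))
    ((limP t (by linarith : (0:ℝ) < x)).rpow_const (Or.inr (by linarith))) (fun n => ?_)
  have hc : ∀ i : ℕ, (0:ℝ) ≤ (i:ℝ) := fun i => Nat.cast_nonneg i
  have p1 : ∀ i : ℕ, 0 < qf t (x - 1 + i) := fun i => qf_pos ht (by have := hc i; linarith)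
  have p2 : ∀ i : ℕ, 0 < qf t (x + θ + i) := fun i => qf_pos ht (by have := hc i; linarith)
  unfold Pn
  rw [← Real.finset_prod_rpow _ _ (fun i _ => (p1 i).le) _,
    ← Real.finset_prod_rpow _ _ (fun (i : ℕ) _ => (qf_pos ht (by have := hc i; linarith : (0:ℝ) < x + (i:ℝ))).le) _,
    ← Finset.prod_mul_distrib]
  refine Finset.prod_le_prod
    (fun i _ => mul_nonneg (Real.rpow_nonneg (p1 i).le _) (p2 i).le)
    (fun i _ => ?_)
  have e1 : x - 1 + (i:ℝ) = (x + i) - 1 := by ring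
  have e2 : x + θ + (i:ℝ) = (x + i) + θ := by ring
  rw [e1, e2]
  exact fact2 ht (by have := hc i; linarith) hθ0 hθ1


def den (x t : ℝ) : ℝ := Real.sqrt (2 * Real.pi) * Real.exp (-(Real.pi * t) / 2) * t ^ (x - 1/2)
def rho (x t : ℝ) : ℝ := Af x t / den x t

lemma den_pos (x : ℝ) {t : ℝ} (ht : 0 < t) : 0 < den x t := by
  have h2π : (0:ℝ) < 2 * Real.pi := by positivity
  unfold den; positivity

lemma zne {x t : ℝ} (hx : 0 < x) : (↑x + Complex.I * ↑t : ℂ) ≠ 0 := by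
  intro h
  have := congrArg Complex.re h
  simp at this
  exact hx.ne' this

lemma Af_pos {x t : ℝ} (hx : 0 < x) : 0 < Af x t := by
  unfold Af
  refine norm_pos_iff.mpr (Complex.Gamma_ne_zero_of_re_pos ?_)
  simpa using hx

lemma rho_pos {x t : ℝ} (hx : 0 < x) (ht : 0 < t) : 0 < rho x t :=
  div_pos (Af_pos hx) (den_pos x ht)

lemma absxt (x t : ℝ) : ‖(↑x + Complex.I * ↑t : ℂ)‖ = Real.sqrt (x ^ 2 + t ^ 2) := by
  rw [show (↑x + Complex.I * ↑t : ℂ) = ↑x + ↑t * Complex.I by ring, Complex.norm_add_mul_I]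

lemma Af_rec {x t : ℝ} (hx : 0 < x) :
    Af (x + 1) t = Real.sqrt (x ^ 2 + t ^ 2) * Af x t := by
  unfold Af
  have e : ((x + 1 : ℝ) : ℂ) + Complex.I * ↑t = (↑x + Complex.I * ↑t) + 1 := by push_cast; ring
  rw [e, Complex.Gamma_add_one _ (zne hx), norm_mul, absxt]

lemma den_rec {x t : ℝ} (ht : 0 < t) : den (x + 1) t = den x t * t := by
  unfold den
  have e : x + 1 - 1/2 = (x - 1/2) + 1 := by ring
  rw [e, Real.rpow_add ht, Real.rpow_one]
  ring

lemma rho_rec {x t : ℝ} (hx : 0 < x) (ht : 0 < t) :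
    rho (x + 1) t = rho x t * (Real.sqrt (x ^ 2 + t ^ 2) / t) := by
  unfold rho
  rw [Af_rec hx, den_rec ht]
  field_simp [(den_pos x ht).ne', ht.ne']

/-- exact value at `x = 1` -/
lemma sq_Af_one {t : ℝ} (ht : 0 < t) :
    Af 1 t ^ 2 = Real.pi * t / Real.sinh (Real.pi * t) := by
  have hne : (Complex.I * (t:ℂ)) ≠ 0 :=
    mul_ne_zero Complex.I_ne_zero (Complex.ofReal_ne_zero.2 ht.ne')
  have hsh : Real.sinh (Real.pi * t) ≠ 0 :=
    (Real.sinh_pos_iff.2 (by positivity)).ne'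
  have habs : ((Af 1 t ^ 2 : ℝ) : ℂ)
      = Complex.Gamma (↑(1:ℝ) + Complex.I * ↑t) * Complex.Gamma (1 - Complex.I * ↑t) := by
    have h1 : Complex.Gamma (1 - Complex.I * ↑t)
        = (starRingEnd ℂ) (Complex.Gamma (↑(1:ℝ) + Complex.I * ↑t)) := by
      have harg : (starRingEnd ℂ) (↑(1:ℝ) + Complex.I * ↑t) = 1 - Complex.I * ↑t := by
        simp [Complex.ext_iff]
      rw [← harg, ← Complex.Gamma_conj]
    rw [h1, Complex.mul_conj]
    unfold Af
    rw [← Complex.sq_norm]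
  have key : Complex.Gamma (↑(1:ℝ) + Complex.I * ↑t) * Complex.Gamma (1 - Complex.I * ↑t)
      = ((Real.pi * t / Real.sinh (Real.pi * t) : ℝ) : ℂ) := by
    have e : (↑(1:ℝ) : ℂ) + Complex.I * ↑t = (Complex.I * ↑t) + 1 := by push_cast; ring
    rw [e, Complex.Gamma_add_one _ hne, mul_assoc, Complex.Gamma_mul_Gamma_one_sub]
    have hsin : Complex.sin (↑Real.pi * (Complex.I * ↑t))
        = ↑(Real.sinh (Real.pi * t)) * Complex.I := by
      have e2 : (↑Real.pi * (Complex.I * ↑t) : ℂ) = ↑(Real.pi * t) * Complex.I := by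
        push_cast; ring
      rw [e2, Complex.sin_mul_I, Complex.ofReal_sinh]
    rw [hsin]
    have hI := Complex.I_ne_zero
    have hs : ((Real.sinh (Real.pi * t) : ℝ) : ℂ) ≠ 0 := Complex.ofReal_ne_zero.2 hsh
    field_simp
    push_cast
    ring_nf
    have hs' : Complex.sinh (↑t * ↑Real.pi) ≠ 0 := by
      rw [show (↑t * ↑Real.pi : ℂ) = ↑(Real.pi * t) by push_cast; ring, ← Complex.ofReal_sinh]
      exact hs
    rw [mul_assoc, mul_inv_cancel₀ hs', mul_one]
  rw [key] at habs
  exact_mod_cast habs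


lemma exp_rpow (a w : ℝ) : (Real.exp a) ^ w = Real.exp (a * w) := by
  rw [Real.rpow_def_of_pos (Real.exp_pos a), Real.log_exp]

lemma den_exp {t : ℝ} (ht : 0 < t) (x : ℝ) :
    den x t = Real.exp (Real.log (Real.sqrt (2 * Real.pi)) + (-(Real.pi * t) / 2)
      + (x - 1/2) * Real.log t) := by
  have hsp : (0:ℝ) < Real.sqrt (2 * Real.pi) := Real.sqrt_pos.2 (by positivity)
  unfold den
  rw [Real.rpow_def_of_pos ht, Real.exp_add, Real.exp_add, Real.exp_log hsp, mul_comm (Real.log t)]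

lemma rho_one_tendsto : Tendsto (fun t => rho 1 t) atTop (𝓝 1) := by
  have hsq : ∀ᶠ t in atTop, rho 1 t ^ 2 = (1 - Real.exp (-(2 * (Real.pi * t))))⁻¹ := by
    filter_upwards [eventually_gt_atTop (0:ℝ)] with t ht
    have hsp : (0:ℝ) < Real.sqrt (2 * Real.pi) := Real.sqrt_pos.2 (by positivity)
    have hsh : 0 < Real.sinh (Real.pi * t) := Real.sinh_pos_iff.2 (by positivity)
    have hden2 : den 1 t ^ 2 = 2 * Real.pi * Real.exp (-(Real.pi * t)) * t := by
      have e1 : den 1 t ^ 2 = Real.exp (Real.log (Real.sqrt (2 * Real.pi))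
          + Real.log (Real.sqrt (2 * Real.pi))) * Real.exp (-(Real.pi * t))
          * Real.exp (Real.log t) := by
        rw [den_exp ht 1, sq, ← Real.exp_add, ← Real.exp_add, ← Real.exp_add]
        congr 1
        ring
      rw [e1, Real.exp_add, Real.exp_log hsp, Real.exp_log ht,
        Real.mul_self_sqrt (by positivity)]
    have h2s : 2 * Real.pi * Real.exp (-(Real.pi * t)) * t * Real.sinh (Real.pi * t)
        = Real.pi * t * (1 - Real.exp (-(2 * (Real.pi * t)))) := by
      rw [Real.sinh_eq]
      have e1 : Real.exp (-(Real.pi * t)) * Real.exp (Real.pi * t) = 1 := by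
        rw [← Real.exp_add]; simp
      have e2 : Real.exp (-(Real.pi * t)) * Real.exp (-(Real.pi * t))
          = Real.exp (-(2 * (Real.pi * t))) := by
        rw [← Real.exp_add]; congr 1; ring
      linear_combination (Real.pi * t) * e1 - (Real.pi * t) * e2
    have hrho2 : rho 1 t ^ 2 = Af 1 t ^ 2 / den 1 t ^ 2 := by
      unfold rho; rw [div_pow]
    have hπt : (0:ℝ) < Real.pi * t := by positivity
    rw [hrho2, sq_Af_one ht, hden2, div_div, mul_comm (Real.sinh (Real.pi * t)), h2s,
      mul_comm (Real.pi * t), ← div_div, div_right_comm, div_self hπt.ne', one_div]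
  have hlim2 : Tendsto (fun t => rho 1 t ^ 2) atTop (𝓝 1) := by
    have h0 : Tendsto (fun t : ℝ => 2 * (Real.pi * t)) atTop atTop := by
      have := (tendsto_id (α := ℝ)).const_mul_atTop (by positivity : (0:ℝ) < 2 * Real.pi)
      simpa [mul_assoc] using this
    have hexp : Tendsto (fun t : ℝ => Real.exp (-(2 * (Real.pi * t)))) atTop (𝓝 0) :=
      Real.tendsto_exp_atBot.comp (tendsto_neg_atTop_atBot.comp h0)
    have hinv : Tendsto (fun t : ℝ => (1 - Real.exp (-(2 * (Real.pi * t))))⁻¹) atTop (𝓝 1) := by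
      have := ((tendsto_const_nhds (x := (1:ℝ)) (f := atTop)).sub hexp).inv₀
        (by norm_num : (1:ℝ) - 0 ≠ 0)
      simpa using this
    exact hinv.congr' (hsq.mono fun t h => h.symm)
  have hev : ∀ᶠ t in atTop, Real.sqrt (rho 1 t ^ 2) = rho 1 t := by
    filter_upwards [eventually_gt_atTop (0:ℝ)] with t ht
    exact Real.sqrt_sq (rho_pos one_pos ht).le
  have hfin := (Real.continuous_sqrt.tendsto 1).comp hlim2
  rw [Real.sqrt_one] at hfin
  exact hfin.congr' hev

lemma identA {t : ℝ} (ht : 0 < t) (x θ : ℝ) :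
    den x t ^ (1 - θ) * den (x + 1) t ^ θ = den (x + θ) t := by
  rw [den_exp ht, den_exp ht, den_exp ht, exp_rpow, exp_rpow, ← Real.exp_add]
  congr 1
  ring

lemma identB {t : ℝ} (ht : 0 < t) (x θ : ℝ) :
    den (x - 1) t ^ θ * den (x + θ) t = den x t ^ (1 + θ) := by
  rw [den_exp ht, den_exp ht, den_exp ht, exp_rpow, exp_rpow, ← Real.exp_add]
  congr 1
  ring


lemma Af_eq_rho_mul_den {x t : ℝ} (ht : 0 < t) : Af x t = rho x t * den x t := by
  unfold rho
  rw [div_mul_cancel₀ _ (den_pos x ht).ne']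

lemma chordRho1 {t x θ : ℝ} (ht : 0 < t) (hx : 0 < x) (hθ0 : 0 ≤ θ) (hθ1 : θ ≤ 1) :
    rho x t ^ (1 - θ) * rho (x + 1) t ^ θ
      * (Real.Gamma (x + θ) / (Real.Gamma x ^ (1 - θ) * Real.Gamma (x + 1) ^ θ))
      ≤ rho (x + θ) t := by
  have h := chordR1 ht hx hθ0 hθ1
  have hG1 : (0:ℝ) < Real.Gamma x := Real.Gamma_pos_of_pos hx
  have hG2 : (0:ℝ) < Real.Gamma (x + 1) := Real.Gamma_pos_of_pos (by linarith)
  have hG3 : (0:ℝ) < Real.Gamma (x + θ) := Real.Gamma_pos_of_pos (by linarith)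
  have hd1 := den_pos x ht
  have hd2 := den_pos (x + 1) ht
  have hd3 := den_pos (x + θ) ht
  have hmul := mul_le_mul_of_nonneg_right h
    (le_of_lt (div_pos hG3 hd3) : (0:ℝ) ≤ Real.Gamma (x + θ) / den (x + θ) t)
  have hRHS : Af (x + θ) t / Real.Gamma (x + θ) * (Real.Gamma (x + θ) / den (x + θ) t)
      = rho (x + θ) t := by
    unfold rho; field_simp
  have hLHS : (Af x t / Real.Gamma x) ^ (1 - θ) * (Af (x + 1) t / Real.Gamma (x + 1)) ^ θ
      * (Real.Gamma (x + θ) / den (x + θ) t)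
      = rho x t ^ (1 - θ) * rho (x + 1) t ^ θ
        * (Real.Gamma (x + θ) / (Real.Gamma x ^ (1 - θ) * Real.Gamma (x + 1) ^ θ)) := by
    unfold rho
    rw [Real.div_rpow (Af_pos hx).le hG1.le, Real.div_rpow (Af_pos (by linarith)).le hG2.le,
      Real.div_rpow (Af_pos hx).le hd1.le, Real.div_rpow (Af_pos (by linarith)).le hd2.le,
      ← identA ht x θ]
    have p1 : (0:ℝ) < Real.Gamma x ^ (1 - θ) := Real.rpow_pos_of_pos hG1 _
    have p2 : (0:ℝ) < Real.Gamma (x + 1) ^ θ := Real.rpow_pos_of_pos hG2 _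
    have p3 : (0:ℝ) < den x t ^ (1 - θ) := Real.rpow_pos_of_pos hd1 _
    have p4 : (0:ℝ) < den (x + 1) t ^ θ := Real.rpow_pos_of_pos hd2 _
    field_simp
    try ring
    try (left; trivial)
    try ring
  rw [hRHS, hLHS] at hmul
  exact hmul

lemma chordRho2 {t x θ : ℝ} (ht : 0 < t) (hx : 1 < x) (hθ0 : 0 ≤ θ) (hθ1 : θ ≤ 1) :
    rho (x - 1) t ^ θ * rho (x + θ) t
      ≤ rho x t ^ (1 + θ)
        * (Real.Gamma (x + θ) * Real.Gamma (x - 1) ^ θ / Real.Gamma x ^ (1 + θ)) := by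
  have h := chordR2 ht hx hθ0 hθ1
  have hG1 : (0:ℝ) < Real.Gamma (x - 1) := Real.Gamma_pos_of_pos (by linarith)
  have hG2 : (0:ℝ) < Real.Gamma (x + θ) := Real.Gamma_pos_of_pos (by linarith)
  have hG3 : (0:ℝ) < Real.Gamma x := Real.Gamma_pos_of_pos (by linarith)
  have hd1 := den_pos (x - 1) ht
  have hd2 := den_pos (x + θ) ht
  have hd3 := den_pos x ht
  have hM : (0:ℝ) ≤ Real.Gamma (x - 1) ^ θ * Real.Gamma (x + θ)
      / (den (x - 1) t ^ θ * den (x + θ) t) := by positivity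
  have hmul := mul_le_mul_of_nonneg_right h hM
  have hLHS : (Af (x - 1) t / Real.Gamma (x - 1)) ^ θ * (Af (x + θ) t / Real.Gamma (x + θ))
      * (Real.Gamma (x - 1) ^ θ * Real.Gamma (x + θ)
        / (den (x - 1) t ^ θ * den (x + θ) t))
      = rho (x - 1) t ^ θ * rho (x + θ) t := by
    unfold rho
    rw [Real.div_rpow (Af_pos (by linarith)).le hG1.le,
      Real.div_rpow (Af_pos (by linarith)).le hd1.le]
    have p1 : (0:ℝ) < Real.Gamma (x - 1) ^ θ := Real.rpow_pos_of_pos hG1 _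
    have p3 : (0:ℝ) < den (x - 1) t ^ θ := Real.rpow_pos_of_pos hd1 _
    field_simp
    try ring
    try (left; trivial)
    try ring
  have hRHS : (Af x t / Real.Gamma x) ^ (1 + θ)
      * (Real.Gamma (x - 1) ^ θ * Real.Gamma (x + θ)
        / (den (x - 1) t ^ θ * den (x + θ) t))
      = rho x t ^ (1 + θ)
        * (Real.Gamma (x + θ) * Real.Gamma (x - 1) ^ θ / Real.Gamma x ^ (1 + θ)) := by
    unfold rho
    rw [Real.div_rpow (Af_pos (by linarith)).le hG3.le,
      Real.div_rpow (Af_pos (by linarith)).le hd3.le, identB ht x θ]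
    have p1 : (0:ℝ) < Real.Gamma x ^ (1 + θ) := Real.rpow_pos_of_pos hG3 _
    have p3 : (0:ℝ) < den x t ^ (1 + θ) := Real.rpow_pos_of_pos hd3 _
    field_simp
    try ring
    try (left; trivial)
    try ring
  rw [hLHS, hRHS] at hmul
  exact hmul

/-- product formula for Gamma at integer shifts -/
lemma Gamma_shift (θ : ℝ) (hθ : 0 < θ) :
    ∀ n : ℕ, Real.Gamma (θ + n + 1) = Real.Gamma θ * ∏ j ∈ Finset.range (n + 1), (θ + j) := by
  intro n
  induction n with
  | zero => simp [Real.Gamma_add_one hθ.ne', mul_comm]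
  | succ n ih =>
    have e : θ + (n + 1 : ℕ) + 1 = (θ + n + 1) + 1 := by push_cast; ring
    rw [e, Real.Gamma_add_one (by positivity : (θ + (n:ℝ) + 1) ≠ 0), Finset.prod_range_succ, ih]
    push_cast
    ring

lemma wendel_core {θ : ℝ} (hθ : 0 < θ) :
    Tendsto (fun n : ℕ => Real.Gamma ((n:ℝ) + 1 + θ) / (Real.Gamma ((n:ℝ) + 1) * (n:ℝ) ^ θ))
      atTop (𝓝 1) := by
  have hΓθ : (0:ℝ) < Real.Gamma θ := Real.Gamma_pos_of_pos hθ
  have key : ∀ n : ℕ, 1 ≤ n →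
      Real.Gamma θ / Real.GammaSeq θ n
        = Real.Gamma ((n:ℝ) + 1 + θ) / (Real.Gamma ((n:ℝ) + 1) * (n:ℝ) ^ θ) := by
    intro n hn
    have hn0 : (0:ℝ) < n := by exact_mod_cast hn
    have hprod : (0:ℝ) < ∏ j ∈ Finset.range (n + 1), (θ + j) :=
      Finset.prod_pos fun j _ => by positivity
    have hG : Real.Gamma ((n:ℝ) + 1 + θ)
        = Real.Gamma θ * ∏ j ∈ Finset.range (n + 1), (θ + j) := by
      rw [show (n:ℝ) + 1 + θ = θ + n + 1 by ring]
      exact Gamma_shift θ hθ n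
    rw [hG, Real.Gamma_nat_eq_factorial, Real.GammaSeq]
    rw [div_div_eq_mul_div, mul_comm ((n:ℝ) ^ θ)]
  have h1 : Tendsto (fun n : ℕ => Real.Gamma θ / Real.GammaSeq θ n) atTop (𝓝 1) := by
    have := (tendsto_const_nhds (x := Real.Gamma θ) (f := atTop (α := ℕ))).div
      (Real.GammaSeq_tendsto_Gamma θ) hΓθ.ne'
    rwa [div_self hΓθ.ne'] at this
  exact h1.congr' (eventually_atTop.2 ⟨1, key⟩)

lemma nat_ratio_tendsto : Tendsto (fun n : ℕ => ((n:ℝ) + 1) / (n:ℝ)) atTop (𝓝 1) := by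
  have h : Tendsto (fun n : ℕ => 1 + 1 / (n:ℝ)) atTop (𝓝 1) := by
    have := tendsto_one_div_atTop_nhds_zero_nat (𝕜 := ℝ)
    simpa using (tendsto_const_nhds (x := (1:ℝ))).add this
  apply h.congr'
  filter_upwards [eventually_ge_atTop 1] with n hn
  have hn0 : (0:ℝ) < n := by exact_mod_cast hn
  field_simp

/-- the constant in the lower chord bound -/
lemma cseq_tendsto {θ : ℝ} (hθ0 : 0 < θ) :
    Tendsto (fun n : ℕ => Real.Gamma ((n:ℝ) + 1 + θ)
      / (Real.Gamma ((n:ℝ) + 1) * ((n:ℝ) + 1) ^ θ)) atTop (𝓝 1) := by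
  have h1 := wendel_core hθ0
  have h2 : Tendsto (fun n : ℕ => ((n:ℝ) / ((n:ℝ) + 1)) ^ θ) atTop (𝓝 1) := by
    have hb : Tendsto (fun n : ℕ => (n:ℝ) / ((n:ℝ) + 1)) atTop (𝓝 1) := by
      have := nat_ratio_tendsto.inv₀ one_ne_zero
      simpa using this
    have := hb.rpow_const (Or.inr hθ0.le)
    simpa using this
  have h3 := h1.mul h2
  rw [mul_one] at h3
  apply h3.congr'
  filter_upwards [eventually_ge_atTop 1] with n hn
  have hn0 : (0:ℝ) < n := by exact_mod_cast hn
  have hG : (0:ℝ) < Real.Gamma ((n:ℝ) + 1) := Real.Gamma_pos_of_pos (by positivity)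
  rw [Real.div_rpow hn0.le (by positivity)]
  have p1 : (0:ℝ) < (n:ℝ) ^ θ := Real.rpow_pos_of_pos hn0 _
  have p2 : (0:ℝ) < ((n:ℝ) + 1) ^ θ := Real.rpow_pos_of_pos (by positivity) _
  field_simp

/-- the constant in the upper chord bound -/
lemma dseq_tendsto {θ : ℝ} (hθ0 : 0 < θ) (hθ1 : θ ≤ 1) :
    Tendsto (fun n : ℕ => Real.Gamma (((n:ℝ) + 1) + θ) * Real.Gamma (((n:ℝ) + 1) - 1) ^ θ
      / Real.Gamma ((n:ℝ) + 1) ^ (1 + θ)) atTop (𝓝 1) := by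
  have h1 := wendel_core hθ0
  apply h1.congr'
  filter_upwards [eventually_ge_atTop 1] with n hn
  have hn0 : (0:ℝ) < n := by exact_mod_cast hn
  have hGn : (0:ℝ) < Real.Gamma (n:ℝ) := Real.Gamma_pos_of_pos hn0
  have hGn1 : (0:ℝ) < Real.Gamma ((n:ℝ) + 1) := Real.Gamma_pos_of_pos (by positivity)
  have hrec : Real.Gamma ((n:ℝ) + 1) = (n:ℝ) * Real.Gamma (n:ℝ) := Real.Gamma_add_one hn0.ne'
  have e1 : Real.Gamma ((n:ℝ) + 1) ^ (1 + θ)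
      = Real.Gamma ((n:ℝ) + 1) * (Real.Gamma (n:ℝ) ^ θ * (n:ℝ) ^ θ) := by
    rw [Real.rpow_add hGn1, Real.rpow_one]
    congr 1
    rw [hrec, Real.mul_rpow hn0.le hGn.le]
    ring
  rw [show ((n:ℝ) + 1) - 1 = (n:ℝ) by ring, e1]
  have p1 : (0:ℝ) < Real.Gamma (n:ℝ) ^ θ := Real.rpow_pos_of_pos hGn _
  have p2 : (0:ℝ) < (n:ℝ) ^ θ := Real.rpow_pos_of_pos hn0 _
  field_simp


lemma sqrt_ratio_tendsto (x : ℝ) :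
    Tendsto (fun t : ℝ => Real.sqrt (x ^ 2 + t ^ 2) / t) atTop (𝓝 1) := by
  have h0 : Tendsto (fun t : ℝ => x ^ 2 / t ^ 2) atTop (𝓝 0) :=
    tendsto_const_nhds.div_atTop (tendsto_pow_atTop two_ne_zero)
  have h1 : Tendsto (fun t : ℝ => x ^ 2 / t ^ 2 + 1) atTop (𝓝 1) := by
    simpa using h0.add tendsto_const_nhds
  have h2 := (Real.continuous_sqrt.tendsto 1).comp h1
  rw [Real.sqrt_one] at h2
  apply h2.congr'
  filter_upwards [eventually_gt_atTop 0] with t ht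
  show Real.sqrt (x ^ 2 / t ^ 2 + 1) = Real.sqrt (x ^ 2 + t ^ 2) / t
  rw [show x ^ 2 / t ^ 2 + 1 = (x ^ 2 + t ^ 2) / t ^ 2 by field_simp,
    Real.sqrt_div (by positivity) _, Real.sqrt_sq ht.le]

lemma rho_shift_up {x : ℝ} (hx : 0 < x) (h : Tendsto (fun t => rho x t) atTop (𝓝 1)) :
    Tendsto (fun t => rho (x + 1) t) atTop (𝓝 1) := by
  have h2 := h.mul (sqrt_ratio_tendsto x)
  rw [mul_one] at h2
  apply h2.congr'
  filter_upwards [eventually_gt_atTop 0] with t ht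
  exact (rho_rec hx ht).symm

lemma hint : ∀ n : ℕ, Tendsto (fun t => rho ((n:ℝ) + 1) t) atTop (𝓝 1) := by
  intro n
  induction n with
  | zero => simpa using rho_one_tendsto
  | succ n ih =>
    have h := rho_shift_up (by positivity : (0:ℝ) < (n:ℝ) + 1) ih
    have e : ((n + 1 : ℕ) : ℝ) + 1 = ((n:ℝ) + 1) + 1 := by push_cast; ring
    rw [e]
    exact h

lemma rho_steps {x : ℝ} (hx : 0 < x) (m : ℕ) :
    ∃ g : ℝ → ℝ, Tendsto g atTop (𝓝 1) ∧
      ∀ᶠ t in atTop, 0 < g t ∧ rho x t = rho (x + m) t * g t := by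
  induction m with
  | zero =>
    exact ⟨fun _ => 1, tendsto_const_nhds, Eventually.of_forall fun t => ⟨one_pos, by simp⟩⟩
  | succ m ih =>
    obtain ⟨g, hg1, hg2⟩ := ih
    refine ⟨fun t => g t * (t / Real.sqrt ((x + m) ^ 2 + t ^ 2)), ?_, ?_⟩
    · have hinv := (sqrt_ratio_tendsto (x + m)).inv₀ one_ne_zero
      simp only [inv_one] at hinv
      have := hg1.mul hinv
      rw [mul_one] at this
      apply this.congr
      intro t
      rw [inv_div]
    · filter_upwards [hg2, eventually_gt_atTop 0] with t hgt ht
      have hsq : (0:ℝ) < Real.sqrt ((x + m) ^ 2 + t ^ 2) :=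
        Real.sqrt_pos.2 (by positivity)
      constructor
      · exact mul_pos hgt.1 (div_pos ht hsq)
      · have hrec := rho_rec (by positivity : (0:ℝ) < x + m) ht
        have e : x + ((m + 1 : ℕ) : ℝ) = (x + m) + 1 := by push_cast; ring
        rw [e, hrec, hgt.2]
        field_simp
  
lemma main_frac {θ : ℝ} (hθ0 : 0 < θ) (hθ1 : θ < 1) :
    Tendsto (fun t => rho θ t) atTop (𝓝 1) := by
  rw [tendsto_order]
  constructor
  · intro c hc
    obtain ⟨n, hn⟩ := ((cseq_tendsto hθ0).eventually (eventually_gt_nhds hc)).exists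
    set X : ℝ := (n:ℝ) + 1 with hX
    have hXpos : (0:ℝ) < X := by positivity
    have hGX : (0:ℝ) < Real.Gamma X := Real.Gamma_pos_of_pos hXpos
    set C : ℝ := Real.Gamma (X + θ) / (Real.Gamma X ^ (1 - θ) * Real.Gamma (X + 1) ^ θ) with hC
    have e : Real.Gamma X ^ (1 - θ) * Real.Gamma (X + 1) ^ θ = Real.Gamma X * X ^ θ := by
      rw [Real.Gamma_add_one hXpos.ne', Real.mul_rpow hXpos.le hGX.le,
        show Real.Gamma X ^ (1 - θ) * (X ^ θ * Real.Gamma X ^ θ)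
          = Real.Gamma X ^ (1 - θ) * Real.Gamma X ^ θ * X ^ θ by ring,
        ← Real.rpow_add hGX, show (1 - θ) + θ = 1 by ring, Real.rpow_one]
    have hCc : c < C := by rw [hC, e]; exact hn
    obtain ⟨g, hg1, hg2⟩ := rho_steps hθ0 (n + 1)
    have l1 : Tendsto (fun t => rho X t) atTop (𝓝 1) := hint n
    have l2 : Tendsto (fun t => rho (X + 1) t) atTop (𝓝 1) := by
      have h := hint (n + 1)
      have e2 : ((n + 1 : ℕ) : ℝ) + 1 = X + 1 := by rw [hX]; push_cast; ring
      rw [e2] at h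
      exact h
    have hΦ : Tendsto (fun t => rho X t ^ (1 - θ) * rho (X + 1) t ^ θ * C * g t)
        atTop (𝓝 C) := by
      have h2 := (((l1.rpow_const (Or.inr (by linarith : (0:ℝ) ≤ 1 - θ))).mul
        (l2.rpow_const (Or.inr hθ0.le))).mul (tendsto_const_nhds (x := C))).mul hg1
      simpa using h2
    have hev := hΦ.eventually (eventually_gt_nhds hCc)
    filter_upwards [hev, hg2, eventually_gt_atTop 0] with t h1t hgt ht
    have hch := chordRho1 ht hXpos hθ0.le hθ1.le
    rw [← hC] at hch
    have heq : rho θ t = rho (X + θ) t * g t := by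
      have h4 := hgt.2
      rw [show θ + ((n + 1 : ℕ) : ℝ) = X + θ by rw [hX]; push_cast; ring] at h4
      exact h4
    calc c < rho X t ^ (1 - θ) * rho (X + 1) t ^ θ * C * g t := h1t
      _ ≤ rho (X + θ) t * g t := mul_le_mul_of_nonneg_right hch hgt.1.le
      _ = rho θ t := heq.symm
  · intro c hc
    obtain ⟨n, hnlt, hn1⟩ := (((dseq_tendsto hθ0 hθ1.le).eventually
      (eventually_lt_nhds hc)).and (eventually_ge_atTop 1)).exists
    set X : ℝ := (n:ℝ) + 1 with hX
    have hn0 : (1:ℝ) ≤ (n:ℝ) := by exact_mod_cast hn1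
    have hX1 : (1:ℝ) < X := by rw [hX]; linarith
    set D : ℝ := Real.Gamma (X + θ) * Real.Gamma (X - 1) ^ θ / Real.Gamma X ^ (1 + θ) with hD
    have hDc : D < c := hnlt
    obtain ⟨g, hg1, hg2⟩ := rho_steps hθ0 (n + 1)
    have l1 : Tendsto (fun t => rho X t) atTop (𝓝 1) := hint n
    have l0 : Tendsto (fun t => rho (X - 1) t) atTop (𝓝 1) := by
      obtain ⟨m, hm⟩ : ∃ m : ℕ, n = m + 1 := ⟨n - 1, by omega⟩
      have h := hint m
      rw [show ((m:ℕ) : ℝ) + 1 = X - 1 by rw [hX, hm]; push_cast; ring] at h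
      exact h
    have hΨ : Tendsto (fun t => rho X t ^ (1 + θ) * D * (rho (X - 1) t ^ θ)⁻¹ * g t)
        atTop (𝓝 D) := by
      have h2 := (((l1.rpow_const (Or.inr (by linarith : (0:ℝ) ≤ 1 + θ))).mul
        (tendsto_const_nhds (x := D))).mul
        ((l0.rpow_const (Or.inr hθ0.le)).inv₀ (by simp))).mul hg1
      simpa using h2
    have hev := hΨ.eventually (eventually_lt_nhds hDc)
    filter_upwards [hev, hg2, eventually_gt_atTop 0] with t h1t hgt ht
    have hch := chordRho2 ht hX1 hθ0.le hθ1.le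
    rw [← hD] at hch
    have hpos : (0:ℝ) < rho (X - 1) t ^ θ :=
      Real.rpow_pos_of_pos (rho_pos (by linarith) ht) θ
    have h3 : rho (X + θ) t ≤ rho X t ^ (1 + θ) * D * (rho (X - 1) t ^ θ)⁻¹ := by
      calc rho (X + θ) t
          = rho (X - 1) t ^ θ * rho (X + θ) t * (rho (X - 1) t ^ θ)⁻¹ := by
            field_simp
        _ ≤ rho X t ^ (1 + θ) * D * (rho (X - 1) t ^ θ)⁻¹ :=
            mul_le_mul_of_nonneg_right hch (inv_nonneg.2 hpos.le)
    have heq : rho θ t = rho (X + θ) t * g t := by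
      have h4 := hgt.2
      rw [show θ + ((n + 1 : ℕ) : ℝ) = X + θ by rw [hX]; push_cast; ring] at h4
      exact h4
    calc rho θ t = rho (X + θ) t * g t := heq
      _ ≤ rho X t ^ (1 + θ) * D * (rho (X - 1) t ^ θ)⁻¹ * g t :=
          mul_le_mul_of_nonneg_right h3 hgt.1.le
      _ < c := h1t

lemma main_real : ∀ x : ℝ, 0 < x → Tendsto (fun t => rho x t) atTop (𝓝 1) := by
  have aux : ∀ n : ℕ, ∀ x : ℝ, 0 < x → x ≤ n + 1 → Tendsto (fun t => rho x t) atTop (𝓝 1) := by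
    intro n
    induction n with
    | zero =>
      intro x hx hx1
      norm_num at hx1
      rcases lt_or_eq_of_le hx1 with h | h
      · exact main_frac hx h
      · rw [h]; exact rho_one_tendsto
    | succ n ih =>
      intro x hx hx1
      rcases le_or_gt x (n + 1) with h | h
      · exact ih x hx h
      · have hx1' : (1:ℝ) < x := by
          have : (1:ℝ) ≤ (n:ℝ) + 1 := by
            have := Nat.cast_nonneg (α := ℝ) n; linarith
          linarith
        have h0 : (0:ℝ) < x - 1 := by linarith
        have h1 : x - 1 ≤ (n:ℝ) + 1 := by push_cast at hx1; linarith
        have := rho_shift_up h0 (ih (x - 1) h0 h1)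
        rw [sub_add_cancel] at this
        exact this
  intro x hx
  obtain ⟨n, hn⟩ := exists_nat_ge x
  exact aux n x hx (by push_cast; linarith)


lemma bridge {a : ℂ} (ha : 0 < a.re) :
    Tendsto (fun y : ℝ => ‖Complex.Gamma (a + Complex.I * y)‖
      / (Real.sqrt (2 * Real.pi) * Real.exp (-(Real.pi * y) / 2) * y ^ (a.re - 1/2)
        * Real.exp (-(Real.pi * a.im) / 2))) atTop (𝓝 1) := by
  have h1 : Tendsto (fun y : ℝ => rho a.re (y + a.im)) atTop (𝓝 1) :=
    (main_real a.re ha).comp (tendsto_atTop_add_const_right atTop a.im tendsto_id)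
  have hb : Tendsto (fun y : ℝ => (y + a.im) / y) atTop (𝓝 1) := by
    have h0 : Tendsto (fun y : ℝ => a.im / y) atTop (𝓝 0) :=
      tendsto_const_nhds.div_atTop tendsto_id
    have h0' := (tendsto_const_nhds (x := (1:ℝ))).add h0
    rw [add_zero] at h0'
    apply h0'.congr'
    filter_upwards [eventually_gt_atTop 0] with y hy
    field_simp
  have h2 : Tendsto (fun y : ℝ => ((y + a.im) / y) ^ (a.re - 1/2)) atTop (𝓝 1) := by
    have := hb.rpow_const (p := a.re - 1/2) (Or.inl one_ne_zero)
    simpa [Real.one_rpow] using this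
  have h3 := h1.mul h2
  rw [mul_one] at h3
  apply h3.congr'
  filter_upwards [eventually_gt_atTop 0, eventually_gt_atTop (-a.im)] with y hy0 hyb
  have hyb' : (0:ℝ) < y + a.im := by linarith
  have harg : a + Complex.I * ↑y = ↑a.re + Complex.I * ↑(y + a.im) := by
    apply Complex.ext
    · simp
    · simp [add_comm]
  show rho a.re (y + a.im) * ((y + a.im) / y) ^ (a.re - 1/2) = _
  rw [harg]
  unfold rho den Af
  rw [Real.div_rpow hyb'.le hy0.le,
    show -(Real.pi * (y + a.im)) / 2 = -(Real.pi * y) / 2 + -(Real.pi * a.im) / 2 by ring,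
    Real.exp_add]
  have hsp : (0:ℝ) < Real.sqrt (2 * Real.pi) := Real.sqrt_pos.2 (by positivity)
  have p1 : (0:ℝ) < (y + a.im) ^ (a.re - 1/2) := Real.rpow_pos_of_pos hyb' _
  have p2 : (0:ℝ) < y ^ (a.re - 1/2) := Real.rpow_pos_of_pos hy0 _
  have e1 := Real.exp_pos (-(Real.pi * y) / 2)
  have e2 := Real.exp_pos (-(Real.pi * a.im) / 2)
  field_simp


end Stmt10

open Stmt10 in
/-- As `y → +∞`, `|Γ(a+iy)·Γ(b+iy)| = 2π·y^{u-1}·e^{-πy - πv/2}·(1+o(1))`. -/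
theorem stmt_10 (a b c d : ℂ) (ha : 0 < a.re) (hb : 0 < b.re)
    (hc : c = conj a) (hd : d = conj b)
    (u v : ℝ) (hu : u = (a + b).re) (hv : v = (a + b).im) :
    Tendsto (fun y : ℝ =>
        ‖Complex.Gamma (a + Complex.I * y) * Complex.Gamma (b + Complex.I * y)‖ /
          (2 * Real.pi * y ^ (u - 1) * Real.exp (-Real.pi * y - Real.pi * v / 2)))
      atTop (𝓝 1) := by
  have h := (bridge ha).mul (bridge hb)
  rw [mul_one] at h
  apply h.congr'
  filter_upwards [eventually_gt_atTop 0] with y hy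
  have hd2 : 2 * Real.pi * y ^ (u - 1) * Real.exp (-Real.pi * y - Real.pi * v / 2)
      = (Real.sqrt (2 * Real.pi) * Real.exp (-(Real.pi * y) / 2) * y ^ (a.re - 1/2)
          * Real.exp (-(Real.pi * a.im) / 2))
        * (Real.sqrt (2 * Real.pi) * Real.exp (-(Real.pi * y) / 2) * y ^ (b.re - 1/2)
          * Real.exp (-(Real.pi * b.im) / 2)) := by
    rw [hu, hv, Complex.add_re, Complex.add_im,
      show a.re + b.re - 1 = (a.re - 1/2) + (b.re - 1/2) by ring, Real.rpow_add hy,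
      show -Real.pi * y - Real.pi * (a.im + b.im) / 2
        = (-(Real.pi * y) / 2 + -(Real.pi * a.im) / 2)
          + (-(Real.pi * y) / 2 + -(Real.pi * b.im) / 2) by ring,
      Real.exp_add, Real.exp_add, Real.exp_add]
    have hss : Real.sqrt (2 * Real.pi) * Real.sqrt (2 * Real.pi) = 2 * Real.pi :=
      Real.mul_self_sqrt (by positivity)
    linear_combination (-(y ^ (a.re - 1/2) * y ^ (b.re - 1/2) * Real.exp (-(Real.pi * y) / 2)
      * Real.exp (-(Real.pi * y) / 2) * Real.exp (-(Real.pi * a.im) / 2)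
      * Real.exp (-(Real.pi * b.im) / 2))) * hss
  rw [div_mul_div_comm, ← norm_mul, ← hd2]


end
end
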